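/- Let Λ be a pseudo-symmetric numerical semigroup of genus g(Λ) ≥ 5, i.e., c(Λ) = 2g(Λ) − 1. Then Λ has no grandchildren: there is no pair μ_1 < μ_2 such that μ_1 is a right generator of Λ and μ_2 is a right generator of Λ∖{μ_1}. -/

import Mathlib

/-!
Write `F = 2g - 2` for the Frobenius number. In a pseudo-symmetric semigroup every gap
`x ≠ g - 1` has its mirror `F - x` in `Λ`. If `μ = F + t` is a right generator and `x` is a gap
other than `g - 1` and `F`, then `x + t` is again a gap, since otherwise
`μ = (F - x) + (x + t)`. So every chain of gaps with step `t` ends at `g - 1` or at `F`.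
Since `1` and `2` are gaps, this forces `t = 1`, or `t = 3` with `3 ∈ Λ`; for `t = 2` the chain
`2, 4, …, 2g - 4` consists of gaps although `2g - 4` is the mirror of `2`.
A right generator `μ₂ > μ` of `Λ ∖ {μ}` is at most `μ + a` for every nonzero `a ∈ Λ ∖ {μ}`,
and then it splits as a sum of two such elements: for `t = 1`, `Λ ⊇ [g, 2g - 3]` and
`μ₂ ≤ 3g - 1 ≤ 2(2g - 3)` (here `g ≥ 5` is needed); for `t = 3`,
`μ₂ ∈ {3 + (2g - 1), 3 + 2g, (g + 2) + (g + 2)}`.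
-/

/-- A numerical semigroup: a cofinite submonoid of ℕ, viewed as a set of naturals. -/
def IsNumericalSemigroup (S : Set ℕ) : Prop :=
  0 ∈ S ∧ (∀ a ∈ S, ∀ b ∈ S, a + b ∈ S) ∧ ∃ N : ℕ, ∀ n : ℕ, N ≤ n → n ∈ S

/-- The conductor: the smallest `N` such that every `n ≥ N` belongs to `S`. -/
noncomputable def sgConductor (S : Set ℕ) : ℕ :=
  sInf {N : ℕ | ∀ n : ℕ, N ≤ n → n ∈ S}

/-- The genus: the number of gaps. -/
noncomputable def sgGenus (S : Set ℕ) : ℕ :=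
  Sᶜ.ncard

/-- The rank `k(Λ) = c(Λ) - g(Λ)`. -/
noncomputable def sgRank (S : Set ℕ) : ℕ :=
  sgConductor S - sgGenus S

/-- The multiplicity: the smallest nonzero element. -/
noncomputable def sgMultiplicity (S : Set ℕ) : ℕ :=
  sInf {n : ℕ | n ∈ S ∧ n ≠ 0}

/-- The Frobenius number: the largest gap, i.e. the conductor minus one. -/
noncomputable def sgFrobenius (S : Set ℕ) : ℕ :=
  sgConductor S - 1

/-- `sgElem S j` is the element `λ_j` of `S = {λ_0 = 0 < λ_1 < λ_2 < ⋯}`. -/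
noncomputable def sgElem (S : Set ℕ) (j : ℕ) : ℕ :=
  Nat.nth (· ∈ S) j

/-- The jump `u_j = λ_{j+1} - λ_j`. -/
noncomputable def sgJump (S : Set ℕ) (j : ℕ) : ℕ :=
  sgElem S (j + 1) - sgElem S j

/-- The left elements: elements of `S` smaller than the Frobenius number. -/
def sgLeftElements (S : Set ℕ) : Set ℕ :=
  {x : ℕ | x ∈ S ∧ x + 1 < sgConductor S}

/-- A minimal generator: a nonzero element not the sum of two nonzero elements. -/
def IsMinimalGenerator (S : Set ℕ) (x : ℕ) : Prop :=
  x ∈ S ∧ x ≠ 0 ∧ ¬ ∃ a ∈ S, ∃ b ∈ S, a ≠ 0 ∧ b ≠ 0 ∧ a + b = x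

/-- A right generator: a minimal generator larger than the Frobenius number. -/
def IsRightGenerator (S : Set ℕ) (x : ℕ) : Prop :=
  IsMinimalGenerator S x ∧ sgFrobenius S < x

/-- A strong generator: a right generator `μ` such that `μ + m(Λ)` is a minimal
generator of `Λ ∖ {μ}`. -/
noncomputable def IsStrongGenerator (S : Set ℕ) (x : ℕ) : Prop :=
  IsRightGenerator S x ∧ IsMinimalGenerator (S \ {x}) (x + sgMultiplicity S)

/-- A new generator of `Λ`: a minimal generator of `Λ` that is not a minimal
generator of `Λ ∪ {F(Λ)}`. -/
noncomputable def IsNewGenerator (S : Set ℕ) (x : ℕ) : Prop :=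
  IsMinimalGenerator S x ∧ ¬ IsMinimalGenerator (S ∪ {sgFrobenius S}) x

/-- `x` (an element `λ_s ≥ c(Λ)`) is an order-`p` seed of `Λ` if
`x + λ_p ≠ λ_i + λ_j` for all `p < i ≤ j < s`, i.e. for all `i ≤ j` with
`p < i` and `λ_j < x`. -/
noncomputable def IsSeed (S : Set ℕ) (p x : ℕ) : Prop :=
  sgConductor S ≤ x ∧ ∀ i j : ℕ, p < i → i ≤ j → sgElem S j < x →
    x + sgElem S p ≠ sgElem S i + sgElem S j

/-- `T` is a child of `S`: obtained by removing one right generator. -/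
def IsChild (T S : Set ℕ) : Prop :=
  ∃ μ : ℕ, IsRightGenerator S μ ∧ T = S \ {μ}

/-- A grandchild: a child of a child. -/
def IsGrandchild (T S : Set ℕ) : Prop :=
  ∃ C : Set ℕ, IsChild C S ∧ IsChild T C

/-- A great-grandchild: a child of a grandchild. -/
def IsGreatGrandchild (T S : Set ℕ) : Prop :=
  ∃ C : Set ℕ, IsGrandchild C S ∧ IsChild T C

/-- `⟨a,b,c,…⟩|_κ`: the smallest numerical semigroup containing a given set. -/
def sgClosure (A : Set ℕ) : Set ℕ :=
  ⋂₀ {S : Set ℕ | IsNumericalSemigroup S ∧ A ⊆ S}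


variable {S T : Set ℕ} {a b g t x μ μ' N : ℕ}

namespace IsNumericalSemigroup

theorem conductor_le_iff (hS : IsNumericalSemigroup S) :
    sgConductor S ≤ N ↔ ∀ n, N ≤ n → n ∈ S := by
  refine ⟨fun h n hn => ?_, fun h => Nat.sInf_le h⟩
  obtain ⟨N₀, hN₀⟩ := hS.2.2
  exact Nat.sInf_mem (s := {N | ∀ n, N ≤ n → n ∈ S}) ⟨N₀, hN₀⟩ n (h.trans hn)

theorem mem_of_conductor_le (hS : IsNumericalSemigroup S) (h : sgConductor S ≤ x) : x ∈ S :=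
  hS.conductor_le_iff.1 h x le_rfl

theorem lt_conductor_of_notMem (hS : IsNumericalSemigroup S) (hx : x ∉ S) :
    x < sgConductor S :=
  lt_of_not_ge fun h => hx (hS.mem_of_conductor_le h)

theorem frobenius_notMem (hS : IsNumericalSemigroup S) (hc : 0 < sgConductor S) :
    sgConductor S - 1 ∉ S := by
  intro h
  have : sgConductor S ≤ sgConductor S - 1 := hS.conductor_le_iff.2 fun n hn => by
    rcases hn.eq_or_lt with rfl | hlt
    · exact h
    · exact hS.mem_of_conductor_le (by omega)
  omega

theorem mul_mem (hS : IsNumericalSemigroup S) (ha : a ∈ S) : ∀ k, k * a ∈ S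
  | 0 => by simpa using hS.1
  | k + 1 => by rw [add_one_mul]; exact hS.2.1 _ (hS.mul_mem ha k) _ ha

theorem notMem_of_dvd_frobenius (hS : IsNumericalSemigroup S) (hc : 0 < sgConductor S)
    (h : a ∣ sgConductor S - 1) : a ∉ S := by
  obtain ⟨k, hk⟩ := h
  intro ha
  exact hS.frobenius_notMem hc (hk ▸ mul_comm k a ▸ hS.mul_mem ha k)

theorem frobenius_sub_notMem (hS : IsNumericalSemigroup S) (hb : b ∈ S)
    (hbc : b < sgConductor S) : sgConductor S - 1 - b ∉ S := fun h =>
  hS.frobenius_notMem (by omega) <| by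
    simpa [show b + (sgConductor S - 1 - b) = sgConductor S - 1 by omega] using hS.2.1 _ hb _ h

/-- In a pseudo-symmetric semigroup `x ↦ F - x` maps the elements below the conductor
injectively to the gaps other than `F / 2`; both sets have `g - 1` elements. -/
theorem frobenius_sub_mem_of_pseudoSymmetric (hS : IsNumericalSemigroup S)
    (hps : sgConductor S = 2 * sgGenus S - 1) (hx : x ∉ S) (hxg : x ≠ sgGenus S - 1) :
    sgConductor S - 1 - x ∈ S := by
  classical
  set c := sgConductor S
  set g := sgGenus S
  have hxc := hS.lt_conductor_of_notMem hx
  set gaps := (Finset.range c).filter (· ∉ S)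
  set elems := (Finset.range c).filter (· ∈ S)
  have hgaps : gaps.card = g := by
    rw [← Set.ncard_coe_finset]
    congr 1
    ext y
    simpa [gaps] using hS.lt_conductor_of_notMem
  have helems : elems.card = c - g := by
    have : elems.card + gaps.card = c := by
      simpa using Finset.card_filter_add_card_filter_not (s := Finset.range c) (· ∈ S)
    omega
  have hhalf : g - 1 ∈ gaps := by
    simpa [gaps] using ⟨by omega, hS.notMem_of_dvd_frobenius (by omega) ⟨2, by omega⟩⟩
  have hmaps : Set.MapsTo (fun b => c - 1 - b) elems (gaps.erase (g - 1)) := by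
    intro b hb
    simp only [elems, Finset.coe_filter, Finset.mem_range, Set.mem_ofPred_eq] at hb
    refine Finset.mem_erase.2 ⟨fun (h : c - 1 - b = g - 1) => ?_, ?_⟩
    · exact (Finset.mem_filter.1 hhalf).2 (show g - 1 = b by omega ▸ hb.2)
    · simpa [gaps] using ⟨by omega, hS.frobenius_sub_notMem hb.2 hb.1⟩
  have hinj : Set.InjOn (fun b => c - 1 - b) elems := by
    intro b hb b' hb' h
    simp only [elems, Finset.coe_filter, Finset.mem_range, Set.mem_ofPred_eq] at hb hb' h
    omega
  obtain ⟨b, hb, hbx⟩ := Finset.surjOn_of_injOn_of_card_le _ hmaps hinj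
    (by rw [Finset.card_erase_of_mem hhalf]; omega)
    (Finset.mem_erase.2 ⟨hxg, by simpa [gaps] using ⟨hxc, hx⟩⟩)
  simp only [elems, Finset.coe_filter, Finset.mem_range, Set.mem_ofPred_eq] at hb
  rw [← hbx, show c - 1 - (c - 1 - b) = b by omega]
  exact hb.2

theorem diff_singleton (hS : IsNumericalSemigroup S) (hμ : IsMinimalGenerator S μ) :
    IsNumericalSemigroup (S \ {μ}) := by
  obtain ⟨N, hN⟩ := hS.2.2
  refine ⟨⟨hS.1, Ne.symm hμ.2.1⟩, fun a ha b hb => ⟨hS.2.1 a ha.1 b hb.1, ?_⟩,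
    ⟨N + μ + 1, fun n hn => ⟨hN n (by omega), by simp only [Set.mem_singleton_iff]; omega⟩⟩⟩
  rintro (h : a + b = μ)
  rcases Nat.eq_zero_or_pos a with rfl | ha0
  · exact hb.2 (by simpa using h)
  rcases Nat.eq_zero_or_pos b with rfl | hb0
  · exact ha.2 (by simpa using h)
  exact hμ.2.2 ⟨a, ha.1, b, hb.1, ha0.ne', hb0.ne', h⟩

end IsNumericalSemigroup

theorem IsMinimalGenerator.add_ne (hx : IsMinimalGenerator T x) (ha : a ∈ T) (hb : b ∈ T)
    (ha0 : a ≠ 0) (hb0 : b ≠ 0) : a + b ≠ x :=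
  fun h => hx.2.2 ⟨a, ha, b, hb, ha0, hb0, h⟩

theorem IsMinimalGenerator.le_add_frobenius (hT : IsNumericalSemigroup T)
    (hx : IsMinimalGenerator T x) (ha : a ∈ T) (ha0 : a ≠ 0) : x ≤ a + sgFrobenius T := by
  unfold sgFrobenius
  by_contra h
  exact hx.add_ne ha (hT.mem_of_conductor_le (x := x - a) (by omega)) ha0 (by omega) (by omega)

theorem IsRightGenerator.conductor_le (hμ : IsRightGenerator S μ) : sgConductor S ≤ μ := by
  have := hμ.2
  unfold sgFrobenius at this
  omega

theorem IsRightGenerator.frobenius_diff_singleton (hS : IsNumericalSemigroup S)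
    (hμ : IsRightGenerator S μ) : sgFrobenius (S \ {μ}) = μ := by
  have hT := hS.diff_singleton hμ.1
  have hle : sgConductor (S \ {μ}) ≤ μ + 1 := hT.conductor_le_iff.2 fun n hn =>
    ⟨hS.mem_of_conductor_le (by have := hμ.conductor_le; omega),
      by simp only [Set.mem_singleton_iff]; omega⟩
  have hgt : μ < sgConductor (S \ {μ}) :=
    hT.lt_conductor_of_notMem fun h => h.2 rfl
  unfold sgFrobenius
  omega

theorem add_mul_notMem_of_step {P : Set ℕ} (hstep : ∀ y ∉ S, y ∉ P → y + t ∉ S) (hx : x ∉ S) :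
    ∀ k, (∀ i < k, x + i * t ∉ P) → x + k * t ∉ S
  | 0, _ => by simpa using hx
  | k + 1, hk => by
    rw [add_one_mul, ← add_assoc]
    exact hstep _ (add_mul_notMem_of_step hstep hx k fun i hi => hk i (by omega)) (hk k (by omega))

theorem IsNumericalSemigroup.exists_add_mul_mem_of_step {P : Set ℕ} (hS : IsNumericalSemigroup S)
    (ht : 0 < t) (hstep : ∀ y ∉ S, y ∉ P → y + t ∉ S) (hx : x ∉ S) : ∃ k, x + k * t ∈ P := by
  by_contra! h
  refine add_mul_notMem_of_step hstep hx (sgConductor S) (fun i _ => h i)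
    (hS.mem_of_conductor_le ?_)
  nlinarith

namespace IsRightGenerator

theorem add_notMem_of_notMem (hS : IsNumericalSemigroup S) (hc : sgConductor S = 2 * g - 1)
    (hsym : ∀ x ∉ S, x ≠ g - 1 → sgConductor S - 1 - x ∈ S) (hμ : IsRightGenerator S μ)
    (ht : μ = 2 * g - 2 + t) : ∀ y ∉ S, y ∉ ({g - 1, 2 * g - 2} : Set ℕ) → y + t ∉ S := by
  intro y hy hyP hyt
  simp only [Set.mem_insert_iff, Set.mem_singleton_iff, not_or] at hyP
  have hyc := hS.lt_conductor_of_notMem hy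
  have hμc := hμ.conductor_le
  exact hμ.1.add_ne (hsym y hy hyP.1) hyt (by omega) (by omega) (by omega)

theorem exists_add_mul_eq (hS : IsNumericalSemigroup S) (hc : sgConductor S = 2 * g - 1)
    (hsym : ∀ x ∉ S, x ≠ g - 1 → sgConductor S - 1 - x ∈ S) (hμ : IsRightGenerator S μ)
    (ht : μ = 2 * g - 2 + t) (hx : x ∉ S) : ∃ k, x + k * t = g - 1 ∨ x + k * t = 2 * g - 2 := by
  have hxc := hS.lt_conductor_of_notMem hx
  have hμc := hμ.conductor_le
  simpa using hS.exists_add_mul_mem_of_step (by omega) (hμ.add_notMem_of_notMem hS hc hsym ht) hx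

theorem mem_of_eq_conductor (hS : IsNumericalSemigroup S) (hc : sgConductor S = 2 * g - 1)
    (hsym : ∀ x ∉ S, x ≠ g - 1 → sgConductor S - 1 - x ∈ S) (hμ : IsRightGenerator S μ)
    (hμg : μ = 2 * g - 1) (hgx : g ≤ x) (hxg : x ≤ 2 * g - 3) : x ∈ S := by
  by_contra hx
  have hxc := hS.lt_conductor_of_notMem hx
  have hstep := hμ.add_notMem_of_notMem hS hc hsym (t := 1) (by omega)
  have h1 : 1 ∉ S := hS.notMem_of_dvd_frobenius (by omega) (one_dvd _)
  have hlow := add_mul_notMem_of_step hstep h1 (2 * g - 3 - x) fun i hi => by simp; omega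
  have hmirror := hsym x hx (by omega)
  rw [show sgConductor S - 1 - x = 1 + (2 * g - 3 - x) * 1 by omega] at hmirror
  exact hlow hmirror

theorem ne_two_mul (hS : IsNumericalSemigroup S) (hc : sgConductor S = 2 * g - 1)
    (hsym : ∀ x ∉ S, x ≠ g - 1 → sgConductor S - 1 - x ∈ S) (hμ : IsRightGenerator S μ)
    (hg : 4 ≤ g) : μ ≠ 2 * g := by
  intro hμg
  have hstep := hμ.add_notMem_of_notMem hS hc hsym (t := 2) (by omega)
  have h1 : 1 ∉ S := hS.notMem_of_dvd_frobenius (by omega) (one_dvd _)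
  have h2 : 2 ∉ S := hS.notMem_of_dvd_frobenius (by omega) ⟨g - 1, by omega⟩
  obtain ⟨k, hk⟩ := hμ.exists_add_mul_eq hS hc hsym (t := 2) (by omega) h1
  have hgeven : g % 2 = 0 := by omega
  have hevens := add_mul_notMem_of_step hstep h2 (g - 3) fun i hi => by simp; omega
  have hmirror := hsym 2 h2 (by omega)
  rw [show sgConductor S - 1 - 2 = 2 + (g - 3) * 2 by omega] at hmirror
  exact hevens hmirror

theorem eq_two_mul_add_one (hS : IsNumericalSemigroup S) (hc : sgConductor S = 2 * g - 1)
    (hsym : ∀ x ∉ S, x ≠ g - 1 → sgConductor S - 1 - x ∈ S) (hμ : IsRightGenerator S μ)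
    (hg : 1 ≤ g) (hμg : 2 * g + 1 ≤ μ) : μ = 2 * g + 1 ∧ 3 ∈ S ∧ g + 2 ∈ S := by
  obtain ⟨t, ht⟩ : ∃ t, μ = 2 * g - 2 + t := ⟨μ - (2 * g - 2), by omega⟩
  have hres : ∀ y ∉ S, y % t = (g - 1) % t ∨ y % t = (2 * g - 2) % t := fun y hy => by
    obtain ⟨k, hk | hk⟩ := hμ.exists_add_mul_eq hS hc hsym ht hy <;>
      simp [← hk, Nat.add_mul_mod_self_right]
  have h1 : 1 ∉ S := hS.notMem_of_dvd_frobenius (by omega) (one_dvd _)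
  have h2 : 2 ∉ S := hS.notMem_of_dvd_frobenius (by omega) ⟨g - 1, by omega⟩
  -- `1` and `2` are gaps in different residue classes mod `t ≥ 3`, leaving no class for `3`.
  have h3 : 3 ∈ S := by
    by_contra h3
    have r1 := hres 1 h1
    have r2 := hres 2 h2
    have r3 := hres 3 h3
    rw [Nat.mod_eq_of_lt (by omega : 1 < t)] at r1
    rw [Nat.mod_eq_of_lt (by omega : 2 < t)] at r2
    rcases (show t = 3 ∨ 3 < t by omega) with rfl | h
    · omega
    · rw [Nat.mod_eq_of_lt h] at r3
      omega
  have hμ3 := hμ.1.le_add_frobenius hS h3 (by norm_num)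
  unfold sgFrobenius at hμ3
  obtain rfl : t = 3 := by omega
  refine ⟨by omega, h3, ?_⟩
  by_contra hg2
  have r1 := hres 1 h1
  obtain ⟨k, hk⟩ := hμ.exists_add_mul_eq hS hc hsym ht hg2
  omega

theorem not_isMinimalGenerator_diff_singleton (hS : IsNumericalSemigroup S)
    (hc : sgConductor S = 2 * g - 1) (hsym : ∀ x ∉ S, x ≠ g - 1 → sgConductor S - 1 - x ∈ S)
    (hg : 5 ≤ g) (hμ : IsRightGenerator S μ) (hμμ' : μ < μ') :
    ¬ IsMinimalGenerator (S \ {μ}) μ' := by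
  intro hμ'
  have hT := hS.diff_singleton hμ.1
  have hFT := hμ.frobenius_diff_singleton hS
  have hμc := hμ.conductor_le
  have hmem : ∀ {a}, a ∈ S → a ≠ μ → a ∈ S \ {μ} := fun ha hne => ⟨ha, hne⟩
  have hbig : ∀ {a}, 2 * g - 1 ≤ a → a ∈ S := fun ha => hS.mem_of_conductor_le (by omega)
  rcases (show μ = 2 * g - 1 ∨ μ = 2 * g ∨ 2 * g + 1 ≤ μ by omega) with h | h | h
  · have hmid : ∀ x, g ≤ x → x ≤ 2 * g - 3 → x ∈ S \ {μ} := fun x hgx hxg =>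
      hmem (hμ.mem_of_eq_conductor hS hc hsym h hgx hxg) (by omega)
    have := hμ'.le_add_frobenius hT (hmid g le_rfl (by omega)) (by omega)
    exact hμ'.add_ne (hmid (μ' / 2) (by omega) (by omega))
      (hmid (μ' - μ' / 2) (by omega) (by omega)) (by omega) (by omega) (by omega)
  · exact hμ.ne_two_mul hS hc hsym (by omega) h
  · obtain ⟨rfl, h3, hg2⟩ := hμ.eq_two_mul_add_one hS hc hsym (by omega) h
    have := hμ'.le_add_frobenius hT (hmem h3 (by omega)) (by omega)
    rcases (show μ' = 2 * g + 2 ∨ μ' = 2 * g + 3 ∨ μ' = 2 * g + 4 by omega) with rfl | rfl | rfl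
    · exact hμ'.add_ne (hmem h3 (by omega)) (hmem (hbig le_rfl) (by omega)) (by omega) (by omega)
        (by omega)
    · exact hμ'.add_ne (hmem h3 (by omega)) (hmem (hbig (a := 2 * g) (by omega)) (by omega))
        (by omega) (by omega) (by omega)
    · exact hμ'.add_ne (hmem hg2 (by omega)) (hmem hg2 (by omega)) (by omega) (by omega) (by omega)

end IsRightGenerator

theorem statement18 (S : Set ℕ) (hS : IsNumericalSemigroup S)
    (hps : sgConductor S = 2 * sgGenus S - 1) (hg : 5 ≤ sgGenus S) :
    (¬ ∃ T : Set ℕ, IsGrandchild T S) ∧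
    (¬ ∃ μ₁ μ₂ : ℕ, μ₁ < μ₂ ∧ IsRightGenerator S μ₁ ∧
      IsRightGenerator (S \ {μ₁}) μ₂) := by
  have key : ∀ μ₁ μ₂, μ₁ < μ₂ → IsRightGenerator S μ₁ → ¬ IsMinimalGenerator (S \ {μ₁}) μ₂ :=
    fun _ _ hlt h₁ => h₁.not_isMinimalGenerator_diff_singleton hS hps
      (fun _ hx hxg => hS.frobenius_sub_mem_of_pseudoSymmetric hps hx hxg) hg hlt
  refine ⟨?_, ?_⟩
  · rintro ⟨_, _, ⟨μ₁, h₁, rfl⟩, μ₂, h₂, -⟩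
    exact key μ₁ μ₂ (h₁.frobenius_diff_singleton hS ▸ h₂.2) h₁ h₂.1
  · rintro ⟨μ₁, μ₂, hlt, h₁, h₂⟩
    exact key μ₁ μ₂ hlt h₁ h₂.1
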